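/- Let B, B' be real matrices with d columns such that (1−ε)‖Bx‖₂ ≤ ‖B'x‖₂ ≤ (1+ε)‖Bx‖₂ for all x ∈ ℝ^d, where 0 < ε < 1/2. Then for every x ∈ ℝ^d in the row span of B (equivalently orthogonal to ker(B)), x^T (B'^T B')^+ x = (1 ± O(ε)) · x^T (B^T B)^+ x, where M^+ denotes the Moore–Penrose pseudoinverse. -/

import Mathlib

/-!
For `x ⊥ ker B` the vector `u = (BᵀB)⁺ x` solves `BᵀB u = x`, and then
`xᵀ (BᵀB)⁺ x = max_v (2 ⟨x, v⟩ - ‖B v‖²)`, the maximum being attained at `v = u`. This formula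
is monotone in the quadratic form `v ↦ ‖B v‖²`, so the two-sided bound
`(1 - ε)² ‖B v‖² ≤ ‖B' v‖² ≤ (1 + ε)² ‖B v‖²` yields `(1 - ε)² ℓ' ≤ ℓ ≤ (1 + ε)² ℓ'` for the two
quadratic forms `ℓ, ℓ'` in `x`. The lower bound also gives `ker B' ⊆ ker B`, so that the formula
applies to `B'` as well. Elementary bounds on `(1 ± ε)⁻²` for `0 < ε < 1/2` then give `C = 8`.
-/

open Matrix

/-- Penrose conditions characterizing the Moore–Penrose pseudoinverse. -/
def IsMoorePenrose {m n : Type*} [Fintype m] [Fintype n]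
    (M : Matrix m n ℝ) (P : Matrix n m ℝ) : Prop :=
  M * P * M = M ∧ P * M * P = P ∧ (M * P)ᵀ = M * P ∧ (P * M)ᵀ = P * M

lemma dotProduct_self_nonneg {n R : Type*} [Fintype n] [Ring R] [LinearOrder R]
    [IsStrictOrderedRing R] (v : n → R) : 0 ≤ v ⬝ᵥ v :=
  Finset.sum_nonneg fun i _ => mul_self_nonneg (v i)

lemma dotProduct_self_eq_sum_sq {m : Type*} [Fintype m] (v : m → ℝ) :
    v ⬝ᵥ v = ∑ i, v i ^ 2 := by
  simp only [dotProduct, sq]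

lemma sq_mul_le_of_mul_sqrt_le {a p q : ℝ} (ha : 0 ≤ a) (hp : 0 ≤ p) (hq : 0 ≤ q)
    (h : a * √p ≤ √q) : a ^ 2 * p ≤ q := by
  rwa [Real.le_sqrt (by positivity) hq, mul_pow, Real.sq_sqrt hp] at h

lemma le_sq_mul_of_sqrt_le_mul_sqrt {a p q : ℝ} (hp : 0 ≤ p) (h : √q ≤ a * √p) :
    q ≤ a ^ 2 * p := by
  rw [Real.sqrt_le_iff, mul_pow, Real.sq_sqrt hp] at h
  exact h.2

lemma one_sub_mul_le_and_le_one_add_mul {ε t t' : ℝ} (hε : 0 < ε) (hε2 : ε < 1 / 2)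
    (ht' : 0 ≤ t') (hlow : (1 - ε) ^ 2 * t' ≤ t) (hupp : t ≤ (1 + ε) ^ 2 * t') :
    (1 - 8 * ε) * t ≤ t' ∧ t' ≤ (1 + 8 * ε) * t := by
  have ht : 0 ≤ t := le_trans (by positivity) hlow
  constructor
  · rcases le_or_gt (1 - 8 * ε) 0 with hneg | hpos
    · nlinarith
    · nlinarith [mul_le_mul_of_nonneg_left hupp hpos.le, mul_nonneg hε.le ht',
        mul_nonneg (mul_nonneg hε.le hε.le) ht', pow_pos hε 3]
  · nlinarith [mul_le_mul_of_nonneg_left hlow (by linarith : (0 : ℝ) ≤ 1 + 8 * ε),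
      mul_nonneg (mul_nonneg hε.le ht') (by linarith : (0 : ℝ) ≤ 1 - 2 * ε),
      mul_nonneg (mul_nonneg hε.le ht') (sq_nonneg ε)]

lemma IsMoorePenrose.transpose_one_sub_mul {n : Type*} [Fintype n] [DecidableEq n]
    {M P : Matrix n n ℝ} (hP : IsMoorePenrose M P) : (1 - M * P)ᵀ = 1 - M * P := by
  rw [transpose_sub, transpose_one, hP.2.2.1]

section LeverageScores

variable {m m' n : Type*} [Fintype m] [Fintype m'] [Fintype n]

lemma dotProduct_transpose_mul_self_mulVec (B : Matrix m n ℝ) (v w : n → ℝ) :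
    v ⬝ᵥ (Bᵀ * B) *ᵥ w = B *ᵥ v ⬝ᵥ B *ᵥ w := by
  rw [← mulVec_mulVec, dotProduct_transpose_mulVec, dotProduct_comm]

lemma mul_transpose_mul_self_mul_eq_self [DecidableEq n] {B : Matrix m n ℝ} {P : Matrix n n ℝ}
    (hP : IsMoorePenrose (Bᵀ * B) P) : B * (Bᵀ * B * P) = B := by
  have hR : (1 - Bᵀ * B * P) * (Bᴴ * B) = 0 := by
    rw [conjTranspose_eq_transpose_of_trivial, sub_mul, one_mul, hP.1, sub_self]
  rw [mul_conjTranspose_mul_self_eq_zero, conjTranspose_eq_transpose_of_trivial] at hR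
  have hBR := congrArg transpose hR
  rwa [transpose_mul, transpose_transpose, hP.transpose_one_sub_mul, transpose_zero,
    Matrix.mul_sub, Matrix.mul_one, sub_eq_zero, eq_comm] at hBR

lemma transpose_mul_self_mulVec_mulVec_eq [DecidableEq n] {B : Matrix m n ℝ} {P : Matrix n n ℝ}
    (hP : IsMoorePenrose (Bᵀ * B) P) {x : n → ℝ} (hx : ∀ y, B *ᵥ y = 0 → x ⬝ᵥ y = 0) :
    (Bᵀ * B) *ᵥ (P *ᵥ x) = x := by
  set R := 1 - Bᵀ * B * P
  have hBR : ∀ v, B *ᵥ (R *ᵥ v) = 0 := fun v => by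
    rw [mulVec_mulVec, Matrix.mul_sub, Matrix.mul_one, mul_transpose_mul_self_mul_eq_self hP,
      sub_self, zero_mulVec]
  have hRx : R *ᵥ x ⬝ᵥ R *ᵥ x = 0 := by
    rw [← dotProduct_transpose_mulVec, hP.transpose_one_sub_mul]
    exact hx _ (hBR _)
  rw [dotProduct_self_eq_zero, sub_mulVec, one_mulVec, sub_eq_zero] at hRx
  rw [mulVec_mulVec, ← hRx]

lemma two_mul_dotProduct_sub_le {B : Matrix m n ℝ} {x u : n → ℝ} (hu : (Bᵀ * B) *ᵥ u = x)
    (v : n → ℝ) : 2 * (x ⬝ᵥ v) - B *ᵥ v ⬝ᵥ B *ᵥ v ≤ x ⬝ᵥ u := by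
  have hxv : x ⬝ᵥ v = B *ᵥ u ⬝ᵥ B *ᵥ v := by
    rw [← hu, dotProduct_comm, dotProduct_transpose_mul_self_mulVec, dotProduct_comm]
  have hxu : x ⬝ᵥ u = B *ᵥ u ⬝ᵥ B *ᵥ u := by
    rw [← hu, dotProduct_comm, dotProduct_transpose_mul_self_mulVec]
  have hsq := dotProduct_self_nonneg (B *ᵥ u - B *ᵥ v)
  simp only [sub_dotProduct, dotProduct_sub, dotProduct_comm (B *ᵥ v)] at hsq
  linarith

lemma dotProduct_nonneg_of_mulVec_eq {B : Matrix m n ℝ} {x u : n → ℝ}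
    (hu : (Bᵀ * B) *ᵥ u = x) : 0 ≤ x ⬝ᵥ u := by
  simpa using two_mul_dotProduct_sub_le hu 0

lemma mul_dotProduct_le_mul_dotProduct {B : Matrix m n ℝ} {B' : Matrix m' n ℝ}
    {x u u' : n → ℝ} (hu : (Bᵀ * B) *ᵥ u = x) (hu' : (B'ᵀ * B') *ᵥ u' = x) {a b : ℝ}
    (ha : 0 ≤ a) (hb : 0 < b) (h : ∀ v, a * (B' *ᵥ v ⬝ᵥ B' *ᵥ v) ≤ b * (B *ᵥ v ⬝ᵥ B *ᵥ v)) :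
    a * (x ⬝ᵥ u) ≤ b * (x ⬝ᵥ u') := by
  obtain ⟨s, hs, rfl⟩ : ∃ s, 0 ≤ s ∧ a = s * b :=
    ⟨a / b, div_nonneg ha hb.le, (div_mul_cancel₀ a hb.ne').symm⟩
  have hvar := two_mul_dotProduct_sub_le hu' (s • u)
  have hBu : B *ᵥ u ⬝ᵥ B *ᵥ u = x ⬝ᵥ u := by
    rw [← hu, dotProduct_comm _ u, dotProduct_transpose_mul_self_mulVec]
  have hbound := h u
  simp only [mulVec_smul, dotProduct_smul, smul_dotProduct, smul_eq_mul] at hvar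
  rw [hBu] at hbound
  nlinarith [mul_le_mul_of_nonneg_left hvar hb.le, mul_le_mul_of_nonneg_left hbound hs]

lemma mulVec_eq_zero_of_mulVec_eq_zero {B : Matrix m n ℝ} {B' : Matrix m' n ℝ} {a : ℝ}
    (ha : 0 < a) (h : ∀ v, a * (B *ᵥ v ⬝ᵥ B *ᵥ v) ≤ B' *ᵥ v ⬝ᵥ B' *ᵥ v) {y : n → ℝ}
    (hy : B' *ᵥ y = 0) : B *ᵥ y = 0 := by
  have hy' := h y
  rw [hy, dotProduct_zero] at hy'
  exact dotProduct_self_eq_zero.mp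
    (le_antisymm (nonpos_of_mul_nonpos_right hy' ha) (dotProduct_self_nonneg _))

end LeverageScores

/-- generalized leverage-score quadratic forms are preserved up to
1 ± O(ε) under an ε-subspace embedding, for vectors orthogonal to ker(B). -/
theorem stmt2 : ∃ C : ℝ, 0 < C ∧
    ∀ (n₁ n₁' d : ℕ) (B : Matrix (Fin n₁) (Fin d) ℝ) (B' : Matrix (Fin n₁') (Fin d) ℝ)
      (ε : ℝ), 0 < ε → ε < 1/2 →
      (∀ x : Fin d → ℝ,
        (1 - ε) * Real.sqrt (∑ i, (B.mulVec x i)^2) ≤ Real.sqrt (∑ i, (B'.mulVec x i)^2) ∧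
        Real.sqrt (∑ i, (B'.mulVec x i)^2) ≤ (1 + ε) * Real.sqrt (∑ i, (B.mulVec x i)^2)) →
      ∀ (P P' : Matrix (Fin d) (Fin d) ℝ),
        IsMoorePenrose (Bᵀ * B) P → IsMoorePenrose (B'ᵀ * B') P' →
        ∀ x : Fin d → ℝ, (∀ y : Fin d → ℝ, B.mulVec y = 0 → dotProduct x y = 0) →
          (1 - C * ε) * dotProduct x (P.mulVec x) ≤ dotProduct x (P'.mulVec x) ∧
          dotProduct x (P'.mulVec x) ≤ (1 + C * ε) * dotProduct x (P.mulVec x) := by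
  refine ⟨8, by norm_num, fun n₁ n₁' d B B' ε hε hε2 hemb P P' hP hP' x hx => ?_⟩
  have hsq : ∀ v, (1 - ε) ^ 2 * (B *ᵥ v ⬝ᵥ B *ᵥ v) ≤ B' *ᵥ v ⬝ᵥ B' *ᵥ v ∧
      B' *ᵥ v ⬝ᵥ B' *ᵥ v ≤ (1 + ε) ^ 2 * (B *ᵥ v ⬝ᵥ B *ᵥ v) := fun v => by
    obtain ⟨hlow, hupp⟩ := hemb v
    simp only [← dotProduct_self_eq_sum_sq] at hlow hupp
    exact ⟨sq_mul_le_of_mul_sqrt_le (by linarith) (dotProduct_self_nonneg _)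
      (dotProduct_self_nonneg _) hlow,
      le_sq_mul_of_sqrt_le_mul_sqrt (dotProduct_self_nonneg _) hupp⟩
  have hx' : ∀ y, B' *ᵥ y = 0 → x ⬝ᵥ y = 0 := fun y hy =>
    hx y (mulVec_eq_zero_of_mulVec_eq_zero (pow_pos (by linarith) 2) (fun v => (hsq v).1) hy)
  have hu := transpose_mul_self_mulVec_mulVec_eq hP hx
  have hu' := transpose_mul_self_mulVec_mulVec_eq hP' hx'
  have hlow := mul_dotProduct_le_mul_dotProduct hu' hu (sq_nonneg (1 - ε)) one_pos
    (fun v => by simpa only [one_mul] using (hsq v).1)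
  have hupp := mul_dotProduct_le_mul_dotProduct (b := (1 + ε) ^ 2) hu hu' zero_le_one
    (by positivity) (fun v => by simpa only [one_mul] using (hsq v).2)
  rw [one_mul] at hlow hupp
  exact one_sub_mul_le_and_le_one_add_mul hε hε2 (dotProduct_nonneg_of_mulVec_eq hu') hlow hupp
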